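/- arXiv:2502.07668 — 3 statements merged into one kernel-verified Lean document; each statement's English description precedes it below -/
import Mathlib

section
/- With the hypotheses of the projection construction (p₁, p₂ non-proportional future-directed timelike unit vectors in Minkowski ℝ⁴, P² := η(p₁,p₂)), for every v ∈ ℝ⁴ one has η(Π(v), Π(v)) ≤ 0, i.e. the image of the projection Π is a negative-semidefinite (spacelike) subspace; consequently the quantity D² := -η(Π(v),Π(v)) is nonnegative for all v. -/
/-!
Since `η(p₁,p₁) = 1`, the vector `Π v` is η-orthogonal to `p₁`, and the η-orthogonal complement
of a timelike vector is spacelike: for `η(w,p) = 0` the Cauchy–Schwarz inequality on the spatial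
parts gives `w₀² η(p,p) ≤ -|p⃗|² η(w,w)`. The denominator `P² - 1` of `Π` (if it vanished, `Π`
would be the identity, since `0⁻¹ = 0`) is nonzero by the equality case of the same inequality:
if `P² = 1`, then `p₂ - P p₁` is orthogonal to `p₁` and null, hence zero, so `p₂` would be
proportional to `p₁`.
-/

noncomputable section

/-- The Minkowski inner product of signature (+,-,-,-) on ℝ⁴. -/
def eta (x y : Fin 4 → ℝ) : ℝ := x 0 * y 0 - x 1 * y 1 - x 2 * y 2 - x 3 * y 3

/-- The η-orthogonal projection onto the orthogonal complement of span{p₁,p₂}. -/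
def Pj (p₁ p₂ v : Fin 4 → ℝ) : Fin 4 → ℝ :=
  v + ((eta p₁ p₂ ^ 2 - 1)⁻¹) •
    ((eta p₁ v) • p₁ + (eta p₂ v) • p₂ -
      (eta p₁ p₂) • ((eta p₂ v) • p₁ + (eta p₁ v) • p₂))

section Minkowski

variable {p w : Fin 4 → ℝ}

lemma eta_comm (x y : Fin 4 → ℝ) : eta x y = eta y x := by
  simp only [eta]; ring

@[simp]
lemma eta_add_left (x y z : Fin 4 → ℝ) : eta (x + y) z = eta x z + eta y z := by
  simp only [eta, Pi.add_apply]; ring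

@[simp]
lemma eta_sub_left (x y z : Fin 4 → ℝ) : eta (x - y) z = eta x z - eta y z := by
  simp only [eta, Pi.sub_apply]; ring

@[simp]
lemma eta_smul_left (c : ℝ) (x z : Fin 4 → ℝ) : eta (c • x) z = c * eta x z := by
  simp only [eta, Pi.smul_apply, smul_eq_mul]; ring

@[simp]
lemma eta_sub_right (x y z : Fin 4 → ℝ) : eta x (y - z) = eta x y - eta x z := by
  simp only [eta, Pi.sub_apply]; ring

@[simp]
lemma eta_smul_right (c : ℝ) (x z : Fin 4 → ℝ) : eta x (c • z) = c * eta x z := by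
  simp only [eta, Pi.smul_apply, smul_eq_mul]; ring

lemma sq_zero_mul_eta_self_le_of_eta_eq_zero (hw : eta w p = 0) :
    w 0 ^ 2 * eta p p ≤ -(p 1 ^ 2 + p 2 ^ 2 + p 3 ^ 2) * eta w w := by
  simp only [eta] at hw ⊢
  have htime : w 0 * p 0 = w 1 * p 1 + w 2 * p 2 + w 3 * p 3 := by linarith
  have hcauchy : (w 1 * p 1 + w 2 * p 2 + w 3 * p 3) ^ 2 ≤
      (w 1 ^ 2 + w 2 ^ 2 + w 3 ^ 2) * (p 1 ^ 2 + p 2 ^ 2 + p 3 ^ 2) := by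
    nlinarith [sq_nonneg (w 1 * p 2 - w 2 * p 1), sq_nonneg (w 1 * p 3 - w 3 * p 1),
      sq_nonneg (w 2 * p 3 - w 3 * p 2)]
  have : (w 0 * p 0) ^ 2 = (w 1 * p 1 + w 2 * p 2 + w 3 * p 3) ^ 2 := by rw [htime]
  nlinarith

lemma eta_self_neg_of_eta_eq_zero (hp : 0 < eta p p) (hw : eta w p = 0) (hw₀ : w ≠ 0) :
    eta w w < 0 := by
  by_contra! hnonneg
  have hspatial : 0 ≤ p 1 ^ 2 + p 2 ^ 2 + p 3 ^ 2 := by positivity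
  have h0 : w 0 = 0 := by
    have : w 0 ^ 2 * eta p p ≤ 0 :=
      (sq_zero_mul_eta_self_le_of_eta_eq_zero hw).trans (by nlinarith)
    have : w 0 ^ 2 ≤ 0 := by nlinarith
    exact pow_eq_zero_iff two_ne_zero |>.mp (le_antisymm this (sq_nonneg _))
  simp only [eta, h0] at hnonneg
  have h1 : w 1 = 0 := by nlinarith [sq_nonneg (w 2), sq_nonneg (w 3)]
  have h2 : w 2 = 0 := by nlinarith [sq_nonneg (w 1), sq_nonneg (w 3)]
  have h3 : w 3 = 0 := by nlinarith [sq_nonneg (w 1), sq_nonneg (w 2)]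
  exact hw₀ (funext fun i => by fin_cases i <;> assumption)

lemma eta_self_nonpos_of_eta_eq_zero (hp : 0 < eta p p) (hw : eta w p = 0) : eta w w ≤ 0 := by
  rcases eq_or_ne w 0 with rfl | hw₀
  · simp [eta]
  · exact (eta_self_neg_of_eta_eq_zero hp hw hw₀).le

end Minkowski

section Projection

variable {p₁ p₂ : Fin 4 → ℝ}

lemma eta_sq_ne_one (h₁ : eta p₁ p₁ = 1) (h₂ : eta p₂ p₂ = 1) (hprop : ∀ c : ℝ, p₂ ≠ c • p₁) :
    eta p₁ p₂ ^ 2 ≠ 1 := by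
  intro hP
  set w := p₂ - eta p₁ p₂ • p₁
  have hw : eta w p₁ = 0 := by
    simp only [w, eta_sub_left, eta_smul_left, h₁, eta_comm p₂ p₁]; ring
  have hnull : eta w w = 0 := by
    have : eta w w = 1 - eta p₁ p₂ ^ 2 := by
      simp only [w, eta_sub_left, eta_sub_right, eta_smul_left, eta_smul_right, h₁, h₂,
        eta_comm p₂ p₁]
      ring
    rw [this, hP, sub_self]
  have hw₀ : w = 0 := by
    by_contra hw₀
    exact (eta_self_neg_of_eta_eq_zero (h₁ ▸ one_pos) hw hw₀).ne hnull
  exact hprop _ (sub_eq_zero.mp hw₀)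

lemma eta_Pj_left_eq_zero (h₁ : eta p₁ p₁ = 1) (hP : eta p₁ p₂ ^ 2 ≠ 1) (v : Fin 4 → ℝ) :
    eta (Pj p₁ p₂ v) p₁ = 0 := by
  have hP' : eta p₁ p₂ ^ 2 - 1 ≠ 0 := sub_ne_zero.mpr hP
  simp only [Pj, eta_add_left, eta_sub_left, eta_smul_left, h₁, eta_comm p₂ p₁, eta_comm v p₁]
  field_simp
  ring

end Projection

theorem projection_image_spacelike_general (p₁ p₂ : Fin 4 → ℝ)
    (h₁ : eta p₁ p₁ = 1) (h₂ : eta p₂ p₂ = 1)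
    (hprop : ∀ c : ℝ, p₂ ≠ c • p₁) :
    ∀ v : Fin 4 → ℝ,
      eta (Pj p₁ p₂ v) (Pj p₁ p₂ v) ≤ 0 ∧
      0 ≤ -eta (Pj p₁ p₂ v) (Pj p₁ p₂ v) := by
  intro v
  have hspacelike : eta (Pj p₁ p₂ v) (Pj p₁ p₂ v) ≤ 0 :=
    eta_self_nonpos_of_eta_eq_zero (h₁ ▸ one_pos)
      (eta_Pj_left_eq_zero h₁ (eta_sq_ne_one h₁ h₂ hprop) v)
  exact ⟨hspacelike, neg_nonneg.mpr hspacelike⟩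

/-- The image of Π is spacelike: η(Πv,Πv) ≤ 0, hence D² := -η(Πv,Πv) ≥ 0. -/
theorem projection_image_spacelike (p₁ p₂ : Fin 4 → ℝ)
    (h₁ : eta p₁ p₁ = 1) (h₂ : eta p₂ p₂ = 1)
    (hf₁ : 0 < p₁ 0) (hf₂ : 0 < p₂ 0)
    (hprop : ∀ c : ℝ, p₂ ≠ c • p₁) :
    ∀ v : Fin 4 → ℝ,
      eta (Pj p₁ p₂ v) (Pj p₁ p₂ v) ≤ 0 ∧
      0 ≤ -eta (Pj p₁ p₂ v) (Pj p₁ p₂ v) :=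
  projection_image_spacelike_general p₁ p₂ h₁ h₂ hprop
end
end

section
/- Let γ₁, γ₂, γ₃ be timelike straight lines in Minkowski ℝ⁴ whose direction vectors are linearly independent, and suppose the pairwise distances satisfy D(γ₁,γ₂) = D(γ₂,γ₃) = D(γ₃,γ₁) = 0, where D(γ,γ') = 0 is equivalent to γ and γ' having a common point. Then γ₁, γ₂, γ₃ intersect one another at a single common point q, and the set of timelike straight lines through q equals [γ₁]∩[γ₂]∩[γ₃], where [γ] denotes the set of timelike straight lines meeting γ. -/
noncomputable section

/-- The straight line with direction v through the point ξ. -/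
def line (v ξ : Fin 4 → ℝ) : Set (Fin 4 → ℝ) := {x | ∃ u : ℝ, x = u • v + ξ}

/-!
If `p ∈ γ₁ ∩ γ₂`, `r ∈ γ₂ ∩ γ₃`, `w ∈ γ₃ ∩ γ₁`, the triangle `p, r, w` has its sides along
`v₂, v₃, v₁`, so independence forces it to collapse to one point `q`, which is then unique since
already `γ₁ ∩ γ₂` has at most one point. A line meeting the `γᵢ` at `q + αᵢ vᵢ` contains these
three collinear points; since the `αᵢ vᵢ` with all `αᵢ ≠ 0` would be linearly, hence affinely,
independent, some `αᵢ` vanishes and the line passes through `q`.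
-/

section LinearAlgebra

variable {K V : Type*} [AddCommGroup V] {u₁ u₂ u₃ : V}

theorem LinearIndependent.eq_zero_of_smul_add_smul_add_smul_eq_zero [Ring K] [Module K V]
    (h : LinearIndependent K ![u₁, u₂, u₃]) {a b c : K} (habc : a • u₁ + b • u₂ + c • u₃ = 0) :
    a = 0 ∧ b = 0 ∧ c = 0 := by
  have h' := Fintype.linearIndependent_iff.mp h ![a, b, c] (by
    simpa [Fin.sum_univ_three, add_assoc] using habc)
  exact ⟨h' 0, h' 1, h' 2⟩

theorem LinearIndependent.eq_zero_or_eq_zero_or_eq_zero_of_collinear [DivisionRing K] [Module K V]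
    (h : LinearIndependent K ![u₁, u₂, u₃]) {α β γ : K} (q : V)
    (hcol : Collinear K {α • u₁ + q, β • u₂ + q, γ • u₃ + q}) :
    α = 0 ∨ β = 0 ∨ γ = 0 := by
  by_contra! ⟨hα, hβ, hγ⟩
  have hscaled := h.units_smul ![Units.mk0 α hα, Units.mk0 β hβ, Units.mk0 γ hγ]
  have hindep : AffineIndependent K ![α • u₁ + q, β • u₂ + q, γ • u₃ + q] := by
    convert hscaled.affineIndependent.vadd (v := q) using 1
    ext i : 1
    fin_cases i <;> simp [add_comm]
  exact affineIndependent_iff_not_collinear_set.mp hindep hcol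

end LinearAlgebra

section Lines

variable {v ξ v₁ ξ₁ v₂ ξ₂ v₃ ξ₃ : Fin 4 → ℝ}

theorem collinear_line (v ξ : Fin 4 → ℝ) : Collinear ℝ (line v ξ) :=
  (collinear_iff_exists_forall_eq_smul_vadd _).mpr ⟨ξ, v, fun _ hx => hx⟩

theorem exists_eq_smul_add_of_mem_line {x y : Fin 4 → ℝ} (hx : x ∈ line v ξ)
    (hy : y ∈ line v ξ) : ∃ t : ℝ, x = t • v + y := by
  obtain ⟨a, rfl⟩ := hx
  obtain ⟨b, rfl⟩ := hy
  exact ⟨a - b, by module⟩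

theorem line_inter_line_subsingleton (h : LinearIndependent ℝ ![v₁, v₂]) :
    (line v₁ ξ₁ ∩ line v₂ ξ₂).Subsingleton := by
  rintro x ⟨hx₁, hx₂⟩ y ⟨hy₁, hy₂⟩
  obtain ⟨a, rfl⟩ := exists_eq_smul_add_of_mem_line hx₁ hy₁
  obtain ⟨b, hb⟩ := exists_eq_smul_add_of_mem_line hx₂ hy₂
  obtain ⟨rfl, -⟩ := LinearIndependent.pair_iff.mp h a (-b) (by
    rw [add_left_inj] at hb
    rw [hb, neg_smul, add_neg_cancel])
  simp

theorem exists_mem_line_of_pairwise_inter_nonempty (h : LinearIndependent ℝ ![v₁, v₂, v₃])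
    (h₁₂ : (line v₁ ξ₁ ∩ line v₂ ξ₂).Nonempty) (h₂₃ : (line v₂ ξ₂ ∩ line v₃ ξ₃).Nonempty)
    (h₃₁ : (line v₃ ξ₃ ∩ line v₁ ξ₁).Nonempty) :
    ∃ q, q ∈ line v₁ ξ₁ ∧ q ∈ line v₂ ξ₂ ∧ q ∈ line v₃ ξ₃ := by
  obtain ⟨p, hp₁, hp₂⟩ := h₁₂
  obtain ⟨r, hr₂, hr₃⟩ := h₂₃
  obtain ⟨w, hw₃, hw₁⟩ := h₃₁
  obtain ⟨a, hpw⟩ := exists_eq_smul_add_of_mem_line hp₁ hw₁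
  obtain ⟨b, hrp⟩ := exists_eq_smul_add_of_mem_line hr₂ hp₂
  obtain ⟨c, hwr⟩ := exists_eq_smul_add_of_mem_line hw₃ hr₃
  obtain ⟨-, -, rfl⟩ := h.eq_zero_of_smul_add_smul_add_smul_eq_zero (by
    rw [hpw, hwr] at hrp
    linear_combination (norm := module) -hrp)
  rw [zero_smul, zero_add] at hwr
  exact ⟨r, hwr ▸ hw₁, hr₂, hr₃⟩

theorem mem_line_of_inter_nonempty_of_mem_three_lines (h : LinearIndependent ℝ ![v₁, v₂, v₃])
    {q : Fin 4 → ℝ} (hq₁ : q ∈ line v₁ ξ₁) (hq₂ : q ∈ line v₂ ξ₂) (hq₃ : q ∈ line v₃ ξ₃)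
    (h₁ : (line v ξ ∩ line v₁ ξ₁).Nonempty) (h₂ : (line v ξ ∩ line v₂ ξ₂).Nonempty)
    (h₃ : (line v ξ ∩ line v₃ ξ₃).Nonempty) :
    q ∈ line v ξ := by
  obtain ⟨a, ha, ha₁⟩ := h₁
  obtain ⟨b, hb, hb₂⟩ := h₂
  obtain ⟨c, hc, hc₃⟩ := h₃
  obtain ⟨α, rfl⟩ := exists_eq_smul_add_of_mem_line ha₁ hq₁
  obtain ⟨β, rfl⟩ := exists_eq_smul_add_of_mem_line hb₂ hq₂
  obtain ⟨γ, rfl⟩ := exists_eq_smul_add_of_mem_line hc₃ hq₃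
  have hcol := (collinear_line v ξ).subset (Set.insert_subset ha
    (Set.insert_subset hb (Set.singleton_subset_iff.mpr hc)))
  rcases h.eq_zero_or_eq_zero_or_eq_zero_of_collinear q hcol with rfl | rfl | rfl
  · simpa using ha
  · simpa using hb
  · simpa using hc

end Lines

theorem three_lines_common_point_general (v₁ ξ₁ v₂ ξ₂ v₃ ξ₃ : Fin 4 → ℝ)
    (hind : LinearIndependent ℝ ![v₁, v₂, v₃])
    (h₁₂ : (line v₁ ξ₁ ∩ line v₂ ξ₂).Nonempty)
    (h₂₃ : (line v₂ ξ₂ ∩ line v₃ ξ₃).Nonempty)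
    (h₃₁ : (line v₃ ξ₃ ∩ line v₁ ξ₁).Nonempty) :
    ∃ q : Fin 4 → ℝ,
      q ∈ line v₁ ξ₁ ∧ q ∈ line v₂ ξ₂ ∧ q ∈ line v₃ ξ₃ ∧
      (∀ q', q' ∈ line v₁ ξ₁ → q' ∈ line v₂ ξ₂ → q' ∈ line v₃ ξ₃ → q' = q) ∧
      (∀ v ξ : Fin 4 → ℝ, 0 < eta v v →
        (((line v ξ ∩ line v₁ ξ₁).Nonempty ∧ (line v ξ ∩ line v₂ ξ₂).Nonempty ∧
            (line v ξ ∩ line v₃ ξ₃).Nonempty) ↔ q ∈ line v ξ)) := by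
  obtain ⟨q, hq₁, hq₂, hq₃⟩ := exists_mem_line_of_pairwise_inter_nonempty hind h₁₂ h₂₃ h₃₁
  have hind₁₂ : LinearIndependent ℝ ![v₁, v₂] := LinearIndependent.pair_iff.mpr fun s t hst =>
    (hind.eq_zero_of_smul_add_smul_add_smul_eq_zero (c := 0)
      (by rw [hst, zero_smul, add_zero])).imp_right And.left
  refine ⟨q, hq₁, hq₂, hq₃, fun q' hq'₁ hq'₂ _ => ?_, fun v ξ _ => ⟨?_, ?_⟩⟩
  · exact line_inter_line_subsingleton hind₁₂ ⟨hq'₁, hq'₂⟩ ⟨hq₁, hq₂⟩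
  · rintro ⟨h₁, h₂, h₃⟩
    exact mem_line_of_inter_nonempty_of_mem_three_lines hind hq₁ hq₂ hq₃ h₁ h₂ h₃
  · intro hq
    exact ⟨⟨q, hq, hq₁⟩, ⟨q, hq, hq₂⟩, ⟨q, hq, hq₃⟩⟩

/-- Three pairwise intersecting timelike straight lines with linearly independent
directions meet at a single common point q, and the timelike lines through q are
exactly those meeting all three lines (i.e. [q] = [γ₁] ∩ [γ₂] ∩ [γ₃]). -/
theorem three_lines_common_point (v₁ ξ₁ v₂ ξ₂ v₃ ξ₃ : Fin 4 → ℝ)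
    (ht₁ : 0 < eta v₁ v₁) (ht₂ : 0 < eta v₂ v₂) (ht₃ : 0 < eta v₃ v₃)
    (hind : LinearIndependent ℝ ![v₁, v₂, v₃])
    (h₁₂ : (line v₁ ξ₁ ∩ line v₂ ξ₂).Nonempty)
    (h₂₃ : (line v₂ ξ₂ ∩ line v₃ ξ₃).Nonempty)
    (h₃₁ : (line v₃ ξ₃ ∩ line v₁ ξ₁).Nonempty) :
    ∃ q : Fin 4 → ℝ,
      q ∈ line v₁ ξ₁ ∧ q ∈ line v₂ ξ₂ ∧ q ∈ line v₃ ξ₃ ∧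
      (∀ q', q' ∈ line v₁ ξ₁ → q' ∈ line v₂ ξ₂ → q' ∈ line v₃ ξ₃ → q' = q) ∧
      (∀ v ξ : Fin 4 → ℝ, 0 < eta v v →
        (((line v ξ ∩ line v₁ ξ₁).Nonempty ∧ (line v ξ ∩ line v₂ ξ₂).Nonempty ∧
            (line v ξ ∩ line v₃ ξ₃).Nonempty) ↔ q ∈ line v ξ)) :=
  three_lines_common_point_general v₁ ξ₁ v₂ ξ₂ v₃ ξ₃ hind h₁₂ h₂₃ h₃₁
end
end

section
/- With E₄ := αE₀ + βE₁ + γE₂ + δE₃ in Minkowski ℝ⁴ (α > 0, 1+α² = β²+γ²+δ²), the 2-plane spanned by E₄+E₂ and E₁ is spacelike if and only if β² < 2(1+γ); and the 2-plane spanned by E₁+E₂ and E₄ is spacelike if and only if (β+γ)² < 2. -/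
noncomputable section

/-- The standard orthonormal basis of Minkowski ℝ⁴. -/
def e (i : Fin 4) : Fin 4 → ℝ := fun j => if i = j then 1 else 0

/-! On a plane spanned by independent `u, v` the Minkowski form is the binary quadratic form
`a² η(u,u) + 2ab η(u,v) + b² η(v,v)`; as `η(v,v) = -1 < 0` for both planes, this form is
negative definite iff its discriminant `η(u,v)² - η(u,u) η(v,v)` is negative. With
`η(E₄,E₄) = -1` the two discriminants are `β² - 2(1+γ)` and `(β+γ)² - 2`. -/

theorem quadForm_neg_iff_sq_lt {A B C : ℝ} (hC : C < 0) :
    (∀ a b : ℝ, a ≠ 0 ∨ b ≠ 0 → a ^ 2 * A + 2 * a * b * B + b ^ 2 * C < 0) ↔ B ^ 2 < A * C := by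
  have complete_square : ∀ a b : ℝ, C * (a ^ 2 * A + 2 * a * b * B + b ^ 2 * C) =
      (C * b + B * a) ^ 2 + (A * C - B ^ 2) * a ^ 2 := fun a b => by ring
  constructor
  · intro h
    nlinarith [h C (-B) (Or.inl hC.ne), complete_square C (-B)]
  · intro hdisc a b hab
    refine neg_of_mul_pos_right ?_ hC.le
    rw [complete_square]
    rcases eq_or_ne a 0 with rfl | ha
    · have hb : b ≠ 0 := by simpa using hab
      simpa using sq_pos_of_ne_zero (mul_ne_zero hC.ne hb)
    · exact add_pos_of_nonneg_of_pos (sq_nonneg _)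
        (mul_pos (sub_pos.mpr hdisc) (sq_pos_of_ne_zero ha))

theorem linearIndependent_pair_of_apply_ne_zero {ι K : Type*} [Field K] {u v : ι → K} (i : ι)
    (hu : u i ≠ 0) (hvi : v i = 0) (hv : v ≠ 0) : LinearIndependent K ![u, v] := by
  rw [LinearIndependent.pair_iff]
  intro s t hst
  have hs : s = 0 := by simpa [hvi, hu] using congrFun hst i
  subst hs
  simpa [hv] using hst

theorem eta_smul_add_smul (a b : ℝ) (u v : Fin 4 → ℝ) :
    eta (a • u + b • v) (a • u + b • v) = a ^ 2 * eta u u + 2 * a * b * eta u v + b ^ 2 * eta v v := by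
  simp only [eta, Pi.add_apply, Pi.smul_apply, smul_eq_mul]
  ring

def SpacelikeSpan (u v : Fin 4 → ℝ) : Prop :=
  ∀ a b : ℝ, a • u + b • v ≠ 0 → eta (a • u + b • v) (a • u + b • v) < 0

theorem spacelikeSpan_iff_sq_lt {u v : Fin 4 → ℝ} (huv : LinearIndependent ℝ ![u, v])
    (hv : eta v v < 0) : SpacelikeSpan u v ↔ eta u v ^ 2 < eta u u * eta v v := by
  rw [← quadForm_neg_iff_sq_lt hv]
  have hne : ∀ a b : ℝ, a • u + b • v ≠ 0 ↔ a ≠ 0 ∨ b ≠ 0 := fun a b => by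
    rw [← not_and_or, not_iff_not]
    exact ⟨LinearIndependent.pair_iff.mp huv a b, fun ⟨ha, hb⟩ => by simp [ha, hb]⟩
  simp only [SpacelikeSpan, hne, eta_smul_add_smul]

/-- For E₄ := αE₀+βE₁+γE₂+δE₃ (α > 0, 1+α² = β²+γ²+δ²):
span{E₄+E₂,E₁} is spacelike iff β² < 2(1+γ), and
span{E₁+E₂,E₄} is spacelike iff (β+γ)² < 2. -/
theorem spacelike_plane_criteria (α β γ δ : ℝ) (E₄ : Fin 4 → ℝ)
    (hα : 0 < α) (hnorm : 1 + α ^ 2 = β ^ 2 + γ ^ 2 + δ ^ 2)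
    (hE₄ : E₄ = α • e 0 + β • e 1 + γ • e 2 + δ • e 3) :
    ((∀ a b : ℝ, a • (E₄ + e 2) + b • e 1 ≠ 0 →
        eta (a • (E₄ + e 2) + b • e 1) (a • (E₄ + e 2) + b • e 1) < 0) ↔
      β ^ 2 < 2 * (1 + γ)) ∧
    ((∀ a b : ℝ, a • (e 1 + e 2) + b • E₄ ≠ 0 →
        eta (a • (e 1 + e 2) + b • E₄) (a • (e 1 + e 2) + b • E₄) < 0) ↔
      (β + γ) ^ 2 < 2) := by
  obtain ⟨h₀, h₁, h₂, h₃⟩ : E₄ 0 = α ∧ E₄ 1 = β ∧ E₄ 2 = γ ∧ E₄ 3 = δ := by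
    subst hE₄
    simp [e]
  have he₁ : eta (e 1) (e 1) = -1 := by simp [eta, e]
  have hE₄E₄ : eta E₄ E₄ = -1 := by simp [eta, h₀, h₁, h₂, h₃]; linear_combination hnorm
  constructor
  · have hindep : LinearIndependent ℝ ![E₄ + e 2, e 1] :=
      linearIndependent_pair_of_apply_ne_zero 0 (by simp [e, h₀, hα.ne']) (by simp [e])
        (fun h => by simpa [e] using congrFun h 1)
    have huu : eta (E₄ + e 2) (E₄ + e 2) = -2 * (1 + γ) := by
      simp [eta, e, h₀, h₁, h₂, h₃]; linear_combination hnorm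
    have huv : eta (E₄ + e 2) (e 1) = -β := by simp [eta, e, h₀, h₁, h₂, h₃]
    rw [← SpacelikeSpan, spacelikeSpan_iff_sq_lt hindep (by norm_num [he₁]), huu, huv, he₁]
    ring_nf
  · have hindep : LinearIndependent ℝ ![e 1 + e 2, E₄] :=
      LinearIndependent.pair_symm_iff.mp <| linearIndependent_pair_of_apply_ne_zero 0
        (by simp [h₀, hα.ne']) (by simp [e]) (fun h => by simpa [e] using congrFun h 1)
    have huu : eta (e 1 + e 2) (e 1 + e 2) = -2 := by simp [eta, e]; norm_num
    have huv : eta (e 1 + e 2) E₄ = -(β + γ) := by simp [eta, e, h₀, h₁, h₂, h₃]; ring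
    rw [← SpacelikeSpan, spacelikeSpan_iff_sq_lt hindep (by norm_num [hE₄E₄]), huu, huv, hE₄E₄]
    ring_nf
end
end
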